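/- Suppose each of m agents holds n i.i.d. scores, all scores being i.i.d. Bernoulli(p) for some p ∈ [0,1], and the test score S is an independent Bernoulli(p). For any ℓ ∈ {1,…,n}, the prediction set based on the average of the agents' ℓ-th order statistics, Ĉ^Avg(x) := {y : s(x,y) ≤ (1/m)Σ_{j=1}^m S_(ℓ:n),j}, has marginal coverage P(S ≤ (1/m)Σ_j S_(ℓ:n),j) = (1−p) + p·F_{U_((n−ℓ+1):n)}(p)^m, where F_{U_((n−ℓ+1):n)} is the cdf of the Beta(n−ℓ+1, ℓ) distribution. -/

import Mathlib

open MeasureTheory ProbabilityTheory Set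

/-- The `r`-th smallest value (order statistic, 1-indexed, ties with multiplicity)
of a finite real vector. -/
noncomputable def orderStat {N : ℕ} (S : Fin N → ℝ) (r : ℕ) : ℝ :=
  ((Multiset.ofList (List.ofFn S)).sort (· ≤ ·)).getD (r - 1) 0

/-- Product of `N` i.i.d. uniform distributions on `[0,1]`. -/
noncomputable def unifPi (N : ℕ) : Measure (Fin N → ℝ) :=
  Measure.pi fun _ => volume.restrict (Icc (0:ℝ) 1)

/-- The Beta(r, N-r+1) distribution: the law of the `r`-th order statistic of
`N` i.i.d. uniform random variables on `[0,1]`. -/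
noncomputable def betaOS (N r : ℕ) : Measure ℝ :=
  Measure.map (fun u => orderStat u r) (unifPi N)

/-- The cdf of the Beta(r, N-r+1) distribution (cdf of `U_(r:N)`). -/
noncomputable def betaCDF (N r : ℕ) (t : ℝ) : ℝ := (betaOS N r (Iic t)).toReal

/-- Generalized inverse (quantile function) of a cdf. -/
noncomputable def genInv (F : ℝ → ℝ) (p : ℝ) : ℝ := sInf {x | p ≤ F x}

/-- Quantile function of the Beta(r, N-r+1) distribution. -/
noncomputable def betaQuantile (N r : ℕ) (p : ℝ) : ℝ := genInv (betaCDF N r) p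

/-- Quantile-of-quantiles: the `k`-th smallest of the `m` within-group `ℓ`-th
order statistics of an `n × m` array. -/
noncomputable def qqStat {n m : ℕ} (ℓ k : ℕ) (Z : Fin n → Fin m → ℝ) : ℝ :=
  orderStat (fun j => orderStat (fun i => Z i j) ℓ) k

/-- Product of `n × m` i.i.d. uniform distributions on `[0,1]`. -/
noncomputable def unifPi2 (n m : ℕ) : Measure (Fin n → Fin m → ℝ) :=
  Measure.pi fun _ => Measure.pi fun _ => volume.restrict (Icc (0:ℝ) 1)

/-- The law of `U_(ℓ:n, k:m)`, the `k`-th order statistic of the `m` within-group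
`ℓ`-th order statistics of an `n × m` array of i.i.d. uniform variables
(equivalently, of `m` i.i.d. Beta(ℓ, n-ℓ+1) variables). -/
noncomputable def betaBetaOS (n m ℓ k : ℕ) : Measure ℝ :=
  Measure.map (qqStat ℓ k) (unifPi2 n m)

/-- The auxiliary function `g(t) = sup_{δ ∈ (0, min{t,1-t})} (t-δ)/√(log(1/δ))`. -/
noncomputable def gFun (t : ℝ) : ℝ :=
  sSup ((fun δ => (t - δ) / Real.sqrt (Real.log (1/δ))) '' Ioo 0 (min t (1 - t)))

/-- The cdf of the Poisson-Binomial distribution with parameter vector `u`,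
evaluated at the integer `r`. -/
noncomputable def pbCDF {m : ℕ} (u : Fin m → ℝ) (r : ℕ) : ℝ :=
  ∑ A ∈ Finset.univ.powerset.filter (fun A : Finset (Fin m) => A.card ≤ r),
    (∏ j ∈ A, u j) * ∏ j ∈ Aᶜ, (1 - u j)

/-!
On almost every sample all scores are `0` or `1`. For a `0/1` vector, the `ℓ`-th order statistic
is `1` exactly when at least `n - ℓ + 1` entries are `1`, and a `0/1` test score lies below the
average of `m` such indicators iff it is `0` or all of them are `1`. So the event only depends on
which scores equal `1`; by independence its probability is a sum over these `0/1` patterns of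
the Bernoulli weights `∏ᵢ q^{uᵢ} (1 - q)^{1 - uᵢ}`, and this sum factors over the test score and
the `m` agents. The Beta cdf is the same kind of sum: `U_(r:n) ≤ p` iff at least `r` of the `n`
uniforms fall in `[0, p]`, each independently with probability `p`.
-/

open scoped Finset ENNReal

theorem List.Pairwise.getElem_le_iff_lt_countP {α : Type*} [LinearOrder α] {L : List α}
    (hL : L.Pairwise (· ≤ ·)) {k : ℕ} (hk : k < L.length) (t : α) :
    L[k] ≤ t ↔ k < L.countP (· ≤ t) := by
  have mono : Monotone L.get := (List.sortedLE_iff_pairwise.2 hL).monotone_get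
  constructor
  · intro h
    have htake : (L.take (k + 1)).countP (· ≤ t) = k + 1 := by
      rw [List.countP_eq_length.2, List.length_take, min_eq_left hk]
      intro x hx
      obtain ⟨i, hi, rfl⟩ := List.mem_iff_getElem.1 hx
      simp only [List.length_take, lt_min_iff, List.getElem_take, decide_eq_true_eq] at hi ⊢
      exact (mono (a := ⟨i, hi.2⟩) (b := ⟨k, hk⟩) (Nat.le_of_lt_succ hi.1)).trans h
    calc k < (L.take (k + 1)).countP (· ≤ t) := by omega
      _ ≤ L.countP (· ≤ t) := (L.take_sublist _).countP_le
  · contrapose!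
    intro h
    have hdrop : (L.drop k).countP (· ≤ t) = 0 := by
      refine List.countP_eq_zero.2 fun x hx => ?_
      obtain ⟨i, hi, rfl⟩ := List.mem_iff_getElem.1 hx
      simp only [List.length_drop, List.getElem_drop, decide_eq_true_eq, not_le] at hi ⊢
      exact h.trans_le (mono (a := ⟨k, hk⟩) (b := ⟨k + i, by omega⟩) (by simp))
    calc L.countP (· ≤ t) = (L.take k).countP (· ≤ t) + (L.drop k).countP (· ≤ t) := by
          rw [← List.countP_append, List.take_append_drop]
      _ ≤ k := by
          rw [hdrop, add_zero]
          exact List.countP_le_length.trans (by simp)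

theorem card_filter_eq_countP_ofFn {α : Type*} {N : ℕ} (v : Fin N → α) (P : α → Prop)
    [DecidablePred P] : #{i | P (v i)} = (List.ofFn v).countP (P ·) := by
  rw [← Multiset.coe_countP, ← Fin.univ_val_map, Multiset.countP_map]
  rfl

section OrderStatistics

variable {N r : ℕ}

theorem exists_sorted_perm_orderStat_eq (v : Fin N → ℝ) (hr1 : 1 ≤ r) (hrN : r ≤ N) :
    ∃ L : List ℝ, L.Perm (List.ofFn v) ∧ L.Pairwise (· ≤ ·) ∧
      ∃ h : r - 1 < L.length, orderStat v r = L[r - 1] := by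
  set L := (Multiset.ofList (List.ofFn v)).sort (· ≤ ·)
  have hlen : r - 1 < L.length := by simp [L]; omega
  refine ⟨L, ?_, Multiset.pairwise_sort _ _, hlen, List.getD_eq_getElem _ _ hlen⟩
  rw [← Multiset.coe_eq_coe, Multiset.sort_eq]

theorem orderStat_le_iff (v : Fin N → ℝ) (hr1 : 1 ≤ r) (hrN : r ≤ N) (t : ℝ) :
    orderStat v r ≤ t ↔ r ≤ #{i | v i ≤ t} := by
  obtain ⟨L, hperm, hsorted, hlen, heq⟩ := exists_sorted_perm_orderStat_eq v hr1 hrN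
  rw [heq, hsorted.getElem_le_iff_lt_countP hlen, card_filter_eq_countP_ofFn v (· ≤ t),
    ← hperm.countP_eq]
  omega

theorem exists_orderStat_eq (v : Fin N → ℝ) (hr1 : 1 ≤ r) (hrN : r ≤ N) :
    ∃ i, orderStat v r = v i := by
  obtain ⟨L, hperm, -, hlen, heq⟩ := exists_sorted_perm_orderStat_eq v hr1 hrN
  obtain ⟨i, hi⟩ := List.mem_ofFn.1 (hperm.subset (List.getElem_mem hlen))
  exact ⟨i, heq.trans hi.symm⟩

end OrderStatistics

theorem orderStat_indicator {n ℓ : ℕ} (hℓ1 : 1 ≤ ℓ) (hℓn : ℓ ≤ n) (u : Fin n → Bool) :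
    orderStat (fun i => if u i then (1 : ℝ) else 0) ℓ =
      if n - ℓ + 1 ≤ #{i | u i} then 1 else 0 := by
  have hle := orderStat_le_iff (fun i => if u i then (1 : ℝ) else 0) hℓ1 hℓn 0
  have hzeros : (Finset.univ.filter fun i => (if u i then (1 : ℝ) else 0) ≤ 0) =
      Finset.univ.filter fun i => ¬ u i := by
    ext i; cases h : u i <;> simp [h]
  have hcount : #{i | (if u i then (1 : ℝ) else 0) ≤ 0} + #{i | u i} = n := by
    rw [hzeros, add_comm, Finset.card_filter_add_card_filter_not, Finset.card_fin]
  obtain ⟨i, hi⟩ := exists_orderStat_eq (fun i => if u i then (1 : ℝ) else 0) hℓ1 hℓn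
  have h01 : orderStat (fun i => if u i then (1 : ℝ) else 0) ℓ = 0 ∨
      orderStat (fun i => if u i then (1 : ℝ) else 0) ℓ = 1 := by
    rw [hi]; split_ifs <;> simp
  rcases h01 with h0 | h1
  · rw [h0, if_neg]
    have := hle.1 h0.le
    omega
  · rw [h1, if_pos]
    have := mt hle.2 (by rw [h1]; norm_num)
    omega

theorem card_le_card_filter_iff {κ : Type*} [Fintype κ] (Q : κ → Prop) [DecidablePred Q] :
    Fintype.card κ ≤ #{j | Q j} ↔ ∀ j, Q j := by
  rw [← Finset.card_univ, (Finset.card_filter_le _ _).ge_iff_eq, Finset.card_filter_eq_iff]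
  simp

theorem indicator_le_average_iff {m : ℕ} (hm : 1 ≤ m) (P : Prop) [Decidable P]
    (Q : Fin m → Prop) [DecidablePred Q] :
    (if P then (1 : ℝ) else 0) ≤ (1 / m) * ∑ j, (if Q j then (1 : ℝ) else 0) ↔
      (P → ∀ j, Q j) := by
  rw [Finset.sum_boole, one_div, inv_mul_eq_div]
  by_cases hP : P
  · have hm' : (0 : ℝ) < m := by exact_mod_cast hm
    simp only [hP, if_true, true_imp_iff, one_le_div hm', Nat.cast_le,
      ← card_le_card_filter_iff, Fintype.card_fin]
  · simp only [hP, if_false, false_imp_iff, iff_true]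
    positivity

theorem indicator_le_average_orderStat_iff {n m ℓ : ℕ} (hm : 1 ≤ m) (hℓ1 : 1 ≤ ℓ) (hℓn : ℓ ≤ n)
    (b : Bool) (u : Fin n × Fin m → Bool) :
    (if b then (1 : ℝ) else 0) ≤
        (1 / m) * ∑ j, orderStat (fun i => if u (i, j) then (1 : ℝ) else 0) ℓ ↔
      (b → ∀ j, n - ℓ + 1 ≤ #{i | u (i, j)}) := by
  simp only [orderStat_indicator hℓ1 hℓn]
  exact indicator_le_average_iff hm _ _

section BernoulliWeight

variable {ι : Type*} [Fintype ι] [DecidableEq ι] {q : ℝ≥0∞}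

noncomputable def bernoulliWeight (q : ℝ≥0∞) (u : ι → Bool) : ℝ≥0∞ :=
  ∏ i, if u i then q else 1 - q

theorem sum_bernoulliWeight (hq : q ≤ 1) : ∑ u : ι → Bool, bernoulliWeight q u = 1 := by
  simp only [bernoulliWeight]
  rw [← Fintype.prod_sum (fun (_ : ι) (b : Bool) => if b then q else 1 - q)]
  simp [add_tsub_cancel_of_le hq]

theorem sum_bernoulliWeight_le_one (hq : q ≤ 1) (s : Finset (ι → Bool)) :
    ∑ u ∈ s, bernoulliWeight q u ≤ 1 :=
  (Finset.sum_le_sum_of_subset s.subset_univ).trans_eq (sum_bernoulliWeight hq)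

theorem sum_bernoulliWeight_option (hq : q ≤ 1) (Q : (ι → Bool) → Prop) [DecidablePred Q] :
    ∑ u : Option ι → Bool with (u none → Q fun i => u (some i)), bernoulliWeight q u =
      (1 - q) + q * ∑ v with Q v, bernoulliWeight q v := by
  rw [Finset.sum_filter, Finset.sum_filter, Finset.mul_sum,
    Fintype.sum_equiv Equiv.piOptionEquivProd _
      (fun bv : Bool × (ι → Bool) =>
        if (bv.1 → Q bv.2) then (if bv.1 then q else 1 - q) * bernoulliWeight q bv.2 else 0)
      (fun u => by simp [bernoulliWeight, Fintype.prod_option])]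
  simp [Fintype.sum_prod_type, ← Finset.mul_sum, sum_bernoulliWeight hq, add_comm]

theorem sum_bernoulliWeight_forall_column {κ : Type*} [Fintype κ] [DecidableEq κ]
    (Q : (ι → Bool) → Prop) [DecidablePred Q] :
    ∑ u : ι × κ → Bool with ∀ j, Q fun i => u (i, j), bernoulliWeight q u =
      (∑ v with Q v, bernoulliWeight q v) ^ Fintype.card κ := by
  let columns : (κ → ι → Bool) ≃ (ι × κ → Bool) :=
    { toFun := fun V x => V x.2 x.1
      invFun := fun u j i => u (i, j)
      left_inv := fun _ => rfl
      right_inv := fun _ => rfl }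
  rw [← Finset.card_univ, ← Finset.prod_const, Finset.sum_filter, Finset.sum_filter,
    Fintype.prod_sum, ← Fintype.sum_equiv columns]
  intro V
  simp [columns, Finset.prod_ite_zero, bernoulliWeight, Fintype.prod_prod_type_right]

theorem sum_bernoulliWeight_option_forall_column {n m r : ℕ} {q : ℝ≥0∞} (hq : q ≤ 1) :
    ∑ u : Option (Fin n × Fin m) → Bool with (u none → ∀ j, r ≤ #{i | u (some (i, j))}),
        bernoulliWeight q u =
      1 - q + q * (∑ v : Fin n → Bool with r ≤ #{i | v i}, bernoulliWeight q v) ^ m := by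
  have hcolumns := sum_bernoulliWeight_forall_column (κ := Fin m) (q := q)
    fun v : Fin n → Bool => r ≤ #{i | v i}
  simp only [Fintype.card_fin] at hcolumns
  rw [sum_bernoulliWeight_option hq fun v : Fin n × Fin m → Bool => ∀ j, r ≤ #{i | v (i, j)},
    hcolumns]

end BernoulliWeight

section HitPattern

variable {ι Ω α : Type*}

open Classical in
noncomputable def hitPattern (X : ι → Ω → α) (A : Set α) (ω : Ω) : ι → Bool :=
  fun i => decide (X i ω ∈ A)

@[simp]
theorem hitPattern_apply (X : ι → Ω → α) (A : Set α) (ω : Ω) (i : ι) :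
    hitPattern X A ω i = true ↔ X i ω ∈ A := by
  simp [hitPattern]

theorem hitPattern_preimage_singleton (X : ι → Ω → α) (A : Set α) (u : ι → Bool) :
    hitPattern X A ⁻¹' {u} = ⋂ i, X i ⁻¹' (if u i then A else Aᶜ) := by
  ext ω
  simp only [mem_preimage, mem_singleton_iff, mem_iInter, funext_iff]
  refine forall_congr' fun i => ?_
  cases u i <;> simp [hitPattern]

variable [MeasurableSpace Ω]

theorem measurable_hitPattern [MeasurableSpace α] [Countable ι] {X : ι → Ω → α}
    (hX : ∀ i, Measurable (X i)) {A : Set α} (hA : MeasurableSet A) :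
    Measurable (hitPattern X A) :=
  measurable_pi_iff.2 fun i => measurable_to_bool (by simpa [preimage] using hX i hA)

theorem measure_hitPattern_preimage [MeasurableSpace α] [Fintype ι] [DecidableEq ι]
    {μ : Measure Ω} {X : ι → Ω → α} (hindep : iIndepFun X μ) (hX : ∀ i, Measurable (X i))
    {A : Set α} (hA : MeasurableSet A) {q : ℝ≥0∞} (hq : ∀ i, μ (X i ⁻¹' A) = q)
    (P : (ι → Bool) → Prop) [DecidablePred P] :
    μ (hitPattern X A ⁻¹' {u | P u}) = ∑ u with P u, bernoulliWeight q u := by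
  have := hindep.isProbabilityMeasure
  have hsets : ∀ u : ι → Bool, ∀ i, MeasurableSet (if u i then A else Aᶜ) := fun u i => by
    split_ifs
    exacts [hA, hA.compl]
  rw [← Finset.coe_filter_univ, ← sum_measure_preimage_singleton _
    fun u _ => measurable_hitPattern hX hA (measurableSet_singleton u)]
  refine Finset.sum_congr rfl fun u _ => ?_
  rw [hitPattern_preimage_singleton, hindep.meas_iInter fun i => ⟨_, hsets u i, rfl⟩]
  refine Finset.prod_congr rfl fun i _ => ?_
  split_ifs
  · exact hq i
  · rw [preimage_compl, prob_compl_eq_one_sub (hX i hA), hq i]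

theorem ae_eq_ite_hitPattern [Countable ι] {μ : Measure Ω} {X : ι → Ω → ℝ}
    (hbinary : ∀ i, μ (X i ⁻¹' {0, 1}ᶜ) = 0) :
    ∀ᵐ ω ∂μ, ∀ i, X i ω = if hitPattern X {1} ω i then 1 else 0 := by
  refine ae_all_iff.2 fun i => (measure_eq_zero_iff_ae_notMem.1 (hbinary i)).mono fun ω hω => ?_
  simp only [mem_preimage, mem_compl_iff, mem_insert_iff, mem_singleton_iff, not_not] at hω
  rcases hω with h | h <;> simp [h]

end HitPattern

instance : IsProbabilityMeasure (volume.restrict (Icc (0 : ℝ) 1)) :=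
  ⟨by simp [Real.volume_Icc]⟩

theorem orderStat_preimage_Iic {N r : ℕ} (hr1 : 1 ≤ r) (hrN : r ≤ N) (t : ℝ) :
    (fun v : Fin N → ℝ => orderStat v r) ⁻¹' Iic t =
      hitPattern (fun i v => v i) (Iic t) ⁻¹' {u | r ≤ #{i | u i}} := by
  ext v
  simp [orderStat_le_iff v hr1 hrN]

theorem measurable_orderStat {N r : ℕ} (hr1 : 1 ≤ r) (hrN : r ≤ N) :
    Measurable fun v : Fin N → ℝ => orderStat v r :=
  measurable_of_Iic fun t => by
    rw [orderStat_preimage_Iic hr1 hrN]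
    exact measurable_hitPattern measurable_pi_apply measurableSet_Iic
      (Set.toFinite _).measurableSet

theorem betaCDF_eq_sum_bernoulliWeight {N r : ℕ} (hr1 : 1 ≤ r) (hrN : r ≤ N) {p : ℝ}
    (hp : p ∈ Icc (0 : ℝ) 1) :
    betaCDF N r p =
      (∑ u : Fin N → Bool with r ≤ #{i | u i}, bernoulliWeight (.ofReal p) u).toReal := by
  have hunif : ∀ i, unifPi N ((fun v : Fin N → ℝ => v i) ⁻¹' Iic p) = .ofReal p := fun i => by
    have hinter : Iic p ∩ Icc 0 1 = Icc 0 p := by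
      ext x; simp only [mem_inter_iff, mem_Iic, mem_Icc]; have := hp.2; grind
    rw [unifPi, (measurePreserving_eval _ i).measure_preimage measurableSet_Iic.nullMeasurableSet,
      Measure.restrict_apply measurableSet_Iic, hinter, Real.volume_Icc, sub_zero]
  have hindep : iIndepFun (fun i (v : Fin N → ℝ) => v i) (unifPi N) :=
    iIndepFun_pi (X := fun _ => id) fun _ => aemeasurable_id
  rw [betaCDF, betaOS, Measure.map_apply (measurable_orderStat hr1 hrN) measurableSet_Iic,
    orderStat_preimage_Iic hr1 hrN,
    measure_hitPattern_preimage hindep measurable_pi_apply measurableSet_Iic hunif]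

theorem setOf_le_average_orderStat_ae_eq {Ω : Type*} [MeasurableSpace Ω] {μ : Measure Ω}
    {n m ℓ : ℕ} (hm : 1 ≤ m) (hℓ1 : 1 ≤ ℓ) (hℓn : ℓ ≤ n) {W : Option (Fin n × Fin m) → Ω → ℝ}
    (hbinary : ∀ a, μ (W a ⁻¹' {0, 1}ᶜ) = 0) :
    {ω | W none ω ≤ (1 / (m : ℝ)) * ∑ j : Fin m, orderStat (fun i => W (some (i, j)) ω) ℓ}
      =ᵐ[μ] hitPattern W {1} ⁻¹' {u | u none → ∀ j, n - ℓ + 1 ≤ #{i | u (some (i, j))}} := by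
  refine Filter.eventuallyEq_set.2 ?_
  filter_upwards [ae_eq_ite_hitPattern hbinary] with ω hω
  simp only [mem_ofPred_eq, mem_preimage, hω]
  exact indicator_le_average_orderStat_iff hm hℓ1 hℓn (hitPattern W {1} ω none)
    fun x => hitPattern W {1} ω (some x)

theorem avg_quantile_bernoulli_general {Ω : Type*} [MeasurableSpace Ω]
    (μ : Measure Ω)
    {n m : ℕ} (hm : 1 ≤ m)
    (ℓ : ℕ) (hℓ1 : 1 ≤ ℓ) (hℓn : ℓ ≤ n)
    (p : ℝ) (hp : p ∈ Icc (0:ℝ) 1)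
    (W : Option (Fin n × Fin m) → Ω → ℝ) (ν : Measure ℝ)
    (hν : ν = ENNReal.ofReal p • Measure.dirac (1 : ℝ)
        + ENNReal.ofReal (1 - p) • Measure.dirac (0 : ℝ))
    (hmeas : ∀ a, Measurable (W a))
    (hindep : iIndepFun W μ)
    (hlaw : ∀ a, Measure.map (W a) μ = ν) :
    (μ {ω | W none ω
        ≤ (1 / (m : ℝ)) * ∑ j : Fin m, orderStat (fun i => W (some (i, j)) ω) ℓ}).toReal
      = (1 - p) + p * (betaCDF n (n - ℓ + 1) p) ^ m := by
  have hW : ∀ a {s}, MeasurableSet s → μ (W a ⁻¹' s) = ν s := fun a s hs => by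
    rw [← hlaw a, Measure.map_apply (hmeas a) hs]
  have hbinary : ∀ a, μ (W a ⁻¹' {0, 1}ᶜ) = 0 := fun a => by
    rw [hW a (by measurability), hν]
    simp
  have hsuccess : ∀ a, μ (W a ⁻¹' {1}) = .ofReal p := fun a => by
    rw [hW a (measurableSet_singleton 1), hν]
    simp
  have hq : ENNReal.ofReal p ≤ 1 := ENNReal.ofReal_le_one.2 hp.2
  have htail := (sum_bernoulliWeight_le_one hq
    {v : Fin n → Bool | n - ℓ + 1 ≤ #{i | v i}}).trans_lt ENNReal.one_lt_top
  rw [measure_congr (setOf_le_average_orderStat_ae_eq hm hℓ1 hℓn hbinary),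
    measure_hitPattern_preimage hindep hmeas (measurableSet_singleton 1) hsuccess,
    sum_bernoulliWeight_option_forall_column hq,
    betaCDF_eq_sum_bernoulliWeight (by omega) (by omega) hp,
    ENNReal.toReal_add (by simp) (by finiteness), ENNReal.toReal_mul, ENNReal.toReal_pow,
    ENNReal.toReal_sub_of_le hq ENNReal.one_ne_top, ENNReal.toReal_ofReal hp.1,
    ENNReal.toReal_one]

/-- With `m` agents each holding `n` i.i.d. Bernoulli(p) scores and an
independent Bernoulli(p) test score `S`, the averaged-quantile prediction set has
marginal coverage
`P(S ≤ (1/m)Σ_j S_(ℓ:n),j) = (1-p) + p·F_{U_((n-ℓ+1):n)}(p)^m`,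
where `F_{U_((n-ℓ+1):n)}` is the Beta(n-ℓ+1, ℓ) cdf. -/
theorem avg_quantile_bernoulli {Ω : Type*} [MeasurableSpace Ω]
    (μ : Measure Ω) [IsProbabilityMeasure μ]
    {n m : ℕ} (hn : 1 ≤ n) (hm : 1 ≤ m)
    (ℓ : ℕ) (hℓ1 : 1 ≤ ℓ) (hℓn : ℓ ≤ n)
    (p : ℝ) (hp : p ∈ Icc (0:ℝ) 1)
    (W : Option (Fin n × Fin m) → Ω → ℝ) (ν : Measure ℝ)
    (hν : ν = ENNReal.ofReal p • Measure.dirac (1 : ℝ)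
        + ENNReal.ofReal (1 - p) • Measure.dirac (0 : ℝ))
    (hmeas : ∀ a, Measurable (W a))
    (hindep : iIndepFun W μ)
    (hlaw : ∀ a, Measure.map (W a) μ = ν) :
    (μ {ω | W none ω
        ≤ (1 / (m : ℝ)) * ∑ j : Fin m, orderStat (fun i => W (some (i, j)) ω) ℓ}).toReal
      = (1 - p) + p * (betaCDF n (n - ℓ + 1) p) ^ m :=
  avg_quantile_bernoulli_general μ hm ℓ hℓ1 hℓn p hp W ν hν hmeas hindep hlaw
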